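/- Let δ ∈ (0, 1/2). Assume that Σ \ ∂Σ is nonempty, that R(x, δ) > 0 for every x ∈ Σ \ ∂Σ, and that a_δ is finite. Then there exist a point y ∈ Σ \ ∂Σ and a number R₁ > 0 such that: (1) a_δ·R₁ < (1/2)·d_Σ(y, ∂Σ); (2) R(x, δ) > R₁ for every x ∈ B̄_Σ(y, a_δ·R₁); (3) the ball B̄_Σ(y, 5R₁) is not δ weakly chord arc. -/

import Mathlib

open Metric Set

/-- `Σ(x, r)`: the closure (in the intrinsic topology of `X`) of the connected component
containing `x` of the intersection of `Σ` with the open Euclidean ball `𝔹(ι x, r)`,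
where `ι : X → ℝ³` realizes the surface `Σ` as a subset of `ℝ³`. -/
noncomputable def sigmaComp {X : Type*} [TopologicalSpace X]
    (ι : X → EuclideanSpace ℝ (Fin 3)) (x : X) (r : ℝ) : Set X :=
  closure (connectedComponentIn (ι ⁻¹' Metric.ball (ι x) r) x)

/-- A set is homeomorphic to a closed 2-dimensional disk. -/
def IsDisk2 {X : Type*} [TopologicalSpace X] (A : Set X) : Prop :=
  Nonempty (↥A ≃ₜ ↥(Metric.closedBall (0 : EuclideanSpace ℝ (Fin 2)) 1))

/-- The intrinsic closed ball `B̄_Σ(x, R)` is `δ` weakly chord arc: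
(i) for all `s ∈ (0, R)`, `B̄_Σ(x, s) ⊆ Σ \ ∂Σ`, and
(ii) for all `s ∈ (0, R]`, `Σ(x, δ s)` is homeomorphic to a closed 2-disk and
`Σ(x, δ s) ⊆ B̄_Σ(x, s/2)`. -/
def WeaklyChordArc {X : Type*} [MetricSpace X]
    (ι : X → EuclideanSpace ℝ (Fin 3)) (bd : Set X) (δ : ℝ) (x : X) (R : ℝ) : Prop :=
  (∀ s ∈ Set.Ioo (0 : ℝ) R, Metric.closedBall x s ⊆ bdᶜ) ∧
  ∀ s ∈ Set.Ioc (0 : ℝ) R,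
    IsDisk2 (sigmaComp ι x (δ * s)) ∧ sigmaComp ι x (δ * s) ⊆ Metric.closedBall x (s / 2)

/-- `R(x, δ)`: the supremum of radii `R < d_Σ(x, ∂Σ)` such that `B̄_Σ(x, R)` is `δ` weakly
chord arc (equal to `0` if there is no such `R`, by the convention `sSup ∅ = 0` in `ℝ`). -/
noncomputable def chordArcRadius {X : Type*} [MetricSpace X]
    (ι : X → EuclideanSpace ℝ (Fin 3)) (bd : Set X) (x : X) (δ : ℝ) : ℝ :=
  sSup {R : ℝ | R < Metric.infDist x bd ∧ WeaklyChordArc ι bd δ x R}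

/-- The set of ratios `d_Σ(x, ∂Σ) / R(x, δ)` for `x ∈ Σ \ ∂Σ`; `a_δ` is its supremum. -/
noncomputable def ratioSet {X : Type*} [MetricSpace X]
    (ι : X → EuclideanSpace ℝ (Fin 3)) (bd : Set X) (δ : ℝ) : Set ℝ :=
  {r : ℝ | ∃ x ∉ bd, r = Metric.infDist x bd / chordArcRadius ι bd x δ}

/-!
Write `d(x)` for the distance to `∂Σ`, `R(x)` for `R(x, δ)` and `a` for `a_δ`, so that
`d(x) ≤ a R(x)` on `Σ \ ∂Σ`. Since `a > 0`, some `y` has `d(y)/R(y) > 2a/5`, i.e.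
`R(y)/5 < d(y)/(2a)`; any `R₁` strictly between these numbers works. Property (1) is the
upper bound. Property (2) follows from (1): on `B̄_Σ(y, a R₁)` we have `d(x) > d(y)/2 > a R₁`,
hence `a R(x) ≥ d(x) > a R₁`. Property (3) follows from `5 R₁ > R(y)`, because every radius
of a weakly chord arc ball is at most `R(y)`, including the endpoint `d(y)` excluded in the
definition of `R(y)`.
-/

section

variable {X : Type*} [MetricSpace X] {ι : X → EuclideanSpace ℝ (Fin 3)} {bd : Set X}
  {δ : ℝ} {y : X} {r : ℝ}

theorem WeaklyChordArc.mono {r' : ℝ} (h : WeaklyChordArc ι bd δ y r) (hr : r' ≤ r) :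
    WeaklyChordArc ι bd δ y r' :=
  ⟨fun s hs => h.1 s ⟨hs.1, hs.2.trans_le hr⟩, fun s hs => h.2 s ⟨hs.1, hs.2.trans hr⟩⟩

theorem WeaklyChordArc.le_infDist (h : WeaklyChordArc ι bd δ y r) (hbd : bd.Nonempty) :
    r ≤ infDist y bd := by
  by_contra! hlt
  obtain ⟨z, hz, hyz⟩ := (infDist_lt_iff hbd).1 hlt
  have hr : 0 < r := infDist_nonneg.trans_lt hlt
  have hs : (dist y z + r) / 2 ∈ Ioo 0 r := ⟨by positivity, by linarith⟩
  exact h.1 _ hs (mem_closedBall'.2 (by linarith)) hz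

theorem WeaklyChordArc.le_chordArcRadius (h : WeaklyChordArc ι bd δ y r) (hbd : bd.Nonempty) :
    r ≤ chordArcRadius ι bd y δ := by
  by_contra! hlt
  have hbdd : BddAbove {R : ℝ | R < infDist y bd ∧ WeaklyChordArc ι bd δ y R} :=
    ⟨infDist y bd, fun t ht => ht.1.le⟩
  have hmid : (chordArcRadius ι bd y δ + r) / 2 ≤ chordArcRadius ι bd y δ :=
    le_csSup hbdd ⟨by linarith [h.le_infDist hbd], h.mono (by linarith)⟩
  linarith

theorem infDist_le_sSup_ratioSet_mul (hbdd : BddAbove (ratioSet ι bd δ)) {x : X} (hx : x ∉ bd)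
    (hR : 0 < chordArcRadius ι bd x δ) :
    infDist x bd ≤ sSup (ratioSet ι bd δ) * chordArcRadius ι bd x δ :=
  (div_le_iff₀ hR).1 (le_csSup hbdd ⟨x, hx, rfl⟩)

theorem sSup_ratioSet_pos (hbd_closed : IsClosed bd) (hbd_ne : bd.Nonempty) {x : X}
    (hx : x ∉ bd) (hR : 0 < chordArcRadius ι bd x δ) (hbdd : BddAbove (ratioSet ι bd δ)) :
    0 < sSup (ratioSet ι bd δ) :=
  (div_pos ((hbd_closed.notMem_iff_infDist_pos hbd_ne).1 hx) hR).trans_le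
    (le_csSup hbdd ⟨x, hx, rfl⟩)

theorem lt_chordArcRadius_of_mem_closedBall (hRpos : ∀ x ∉ bd, 0 < chordArcRadius ι bd x δ)
    (hbdd : BddAbove (ratioSet ι bd δ)) {R₁ : ℝ}
    (hR₁ : sSup (ratioSet ι bd δ) * R₁ < 1 / 2 * infDist y bd) {x : X}
    (hx : x ∈ closedBall y (sSup (ratioSet ι bd δ) * R₁)) :
    R₁ < chordArcRadius ι bd x δ := by
  set a := sSup (ratioSet ι bd δ)
  have ha : 0 ≤ a := Real.sSup_nonneg fun _ ⟨x, hx, hr⟩ =>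
    hr ▸ div_nonneg infDist_nonneg (hRpos x hx).le
  have hdx : a * R₁ < infDist x bd := by
    linarith [infDist_le_infDist_add_dist (x := y) (y := x) (s := bd), mem_closedBall.1 hx,
      dist_comm x y]
  have hxbd : x ∉ bd := fun hxbd => by
    linarith [infDist_zero_of_mem hxbd, dist_nonneg.trans (mem_closedBall.1 hx)]
  exact lt_of_mul_lt_mul_left
    (hdx.trans_le (infDist_le_sSup_ratioSet_mul hbdd hxbd (hRpos x hxbd))) ha

end

theorem exists_smallest_non_chord_arc_scale_general
    {X : Type*} [MetricSpace X]
    (ι : X → EuclideanSpace ℝ (Fin 3))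
    (bd : Set X) (hbd_closed : IsClosed bd) (hbd_ne : bd.Nonempty)
    (δ : ℝ)
    (hne : ∃ x, x ∉ bd)
    (hRpos : ∀ x ∉ bd, 0 < chordArcRadius ι bd x δ)
    (hbdd : BddAbove (ratioSet ι bd δ)) :
    ∃ y ∉ bd, ∃ R₁ > (0 : ℝ),
      sSup (ratioSet ι bd δ) * R₁ < (1 / 2) * Metric.infDist y bd ∧
      (∀ x ∈ Metric.closedBall y (sSup (ratioSet ι bd δ) * R₁),
        chordArcRadius ι bd x δ > R₁) ∧
      ¬ WeaklyChordArc ι bd δ y (5 * R₁) := by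
  set a := sSup (ratioSet ι bd δ)
  obtain ⟨x₀, hx₀⟩ := hne
  have ha : 0 < a := sSup_ratioSet_pos hbd_closed hbd_ne hx₀ (hRpos x₀ hx₀) hbdd
  obtain ⟨_, ⟨y, hy, rfl⟩, hy_ratio⟩ :=
    exists_lt_of_lt_csSup (⟨_, x₀, hx₀, rfl⟩ : (ratioSet ι bd δ).Nonempty)
      (by linarith : 2 * a / 5 < a)
  have hRy := hRpos y hy
  have hgap : chordArcRadius ι bd y δ / 5 < infDist y bd / (2 * a) := by
    rw [div_lt_div_iff₀ (by norm_num) hRy] at hy_ratio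
    rw [div_lt_div_iff₀ (by norm_num) (by positivity)]
    linarith
  obtain ⟨R₁, hR₁_lo, hR₁_hi⟩ := exists_between hgap
  have h1 : a * R₁ < 1 / 2 * infDist y bd :=
    calc a * R₁ < a * (infDist y bd / (2 * a)) := mul_lt_mul_of_pos_left hR₁_hi ha
      _ = 1 / 2 * infDist y bd := by field_simp
  refine ⟨y, hy, R₁, by linarith, h1, fun x hx => lt_chordArcRadius_of_mem_closedBall hRpos
    hbdd h1 hx, fun hW => ?_⟩
  linarith [hW.le_chordArcRadius hbd_ne]

/-- Lemma `cm3.39`-type: for `δ ∈ (0, 1/2)`, if `Σ \ ∂Σ ≠ ∅`, `R(x, δ) > 0`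
on `Σ \ ∂Σ` and `a_δ` is finite, then there exist `y ∈ Σ \ ∂Σ` and `R₁ > 0` with
(1) `a_δ R₁ < d_Σ(y, ∂Σ)/2`, (2) `R(x, δ) > R₁` for all `x ∈ B̄_Σ(y, a_δ R₁)`, and
(3) `B̄_Σ(y, 5R₁)` is not `δ` weakly chord arc. -/
theorem exists_smallest_non_chord_arc_scale
    {X : Type*} [MetricSpace X] [CompactSpace X] [ConnectedSpace X]
    (ι : X → EuclideanSpace ℝ (Fin 3)) (hι : Continuous ι) (hinj : Function.Injective ι)
    (bd : Set X) (hbd_closed : IsClosed bd) (hbd_ne : bd.Nonempty)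
    (δ : ℝ) (hδ : δ ∈ Set.Ioo (0 : ℝ) (1 / 2))
    (hne : ∃ x, x ∉ bd)
    (hRpos : ∀ x ∉ bd, 0 < chordArcRadius ι bd x δ)
    (hbdd : BddAbove (ratioSet ι bd δ)) :
    ∃ y ∉ bd, ∃ R₁ > (0 : ℝ),
      sSup (ratioSet ι bd δ) * R₁ < (1 / 2) * Metric.infDist y bd ∧
      (∀ x ∈ Metric.closedBall y (sSup (ratioSet ι bd δ) * R₁),
        chordArcRadius ι bd x δ > R₁) ∧
      ¬ WeaklyChordArc ι bd δ y (5 * R₁) :=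
  exists_smallest_non_chord_arc_scale_general ι bd hbd_closed hbd_ne δ hne hRpos hbdd
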